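/- arXiv:2007.07464 — 5 statements merged into one kernel-verified Lean document; each statement's English description precedes it below -/
import Mathlib

section
/- In the graph G_k = K_k ∨ P_{2k+1}, the vertex ordering u_1 ≺ u_2 ≺ ⋯ ≺ u_k ≺ v_1 ≺ v_2 ≺ ⋯ ≺ v_k ≺ x_1 ≺ x_2 ≺ ⋯ ≺ x_k ≺ z is a simple elimination ordering; hence G_k is strongly chordal. -/
def Gk (k : ℕ) : SimpleGraph (Fin (3 * k + 1)) where
  Adj a b := a ≠ b ∧ (a.val < k ∨ b.val < k ∨ a.val + 1 = b.val ∨ b.val + 1 = a.val)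
  symm := ⟨by rintro a b ⟨h1, h2⟩; exact ⟨h1.symm, by tauto⟩⟩
  loopless := ⟨by rintro a ⟨h, _⟩; exact h rfl⟩

def xv (k : ℕ) (i : Fin k) : Fin (3 * k + 1) := ⟨i.val, by have := i.isLt; omega⟩
def uv (k : ℕ) (i : Fin k) : Fin (3 * k + 1) := ⟨k + i.val, by have := i.isLt; omega⟩
def zv (k : ℕ) : Fin (3 * k + 1) := ⟨2 * k, by omega⟩
def vv (k : ℕ) (i : Fin k) : Fin (3 * k + 1) := ⟨3 * k - i.val, by omega⟩

/-- The closed neighbourhood of `v` inside the induced subgraph on `S`: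
`{u ∈ S | u = v ∨ u ~ v}`. -/
def closedNbhdIn {V : Type*} (G : SimpleGraph V) (S : Set V) (v : V) : Set V :=
  {u | u ∈ S ∧ (u = v ∨ G.Adj v u)}

/-- `v` is a simple vertex of the induced subgraph of `G` on `S`: the closed
neighbourhoods (within `S`) of the vertices in its closed neighbourhood are
linearly ordered by inclusion. -/
def IsSimpleIn {V : Type*} (G : SimpleGraph V) (S : Set V) (v : V) : Prop :=
  v ∈ S ∧ ∀ x ∈ closedNbhdIn G S v, ∀ y ∈ closedNbhdIn G S v,
    closedNbhdIn G S x ⊆ closedNbhdIn G S y ∨ closedNbhdIn G S y ⊆ closedNbhdIn G S x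

/-- A simple elimination ordering of `G` : a listing `v_1 ≺ ⋯ ≺ v_n` of all vertices
such that each `v_i` is simple in the subgraph induced on `{v_i, ..., v_n}`. -/
def IsSimpleElimOrdering {V : Type*} (G : SimpleGraph V) (l : List V) : Prop :=
  l.Nodup ∧ (∀ v, v ∈ l) ∧
    ∀ i (h : i < l.length), IsSimpleIn G {v | v ∈ l.drop i} (l.get ⟨i, h⟩)

/-- A graph is chordal if it has no induced cycle of length at least 4. -/
def IsChordal {V : Type*} (G : SimpleGraph V) : Prop :=
  ∀ n, 4 ≤ n → IsEmpty (SimpleGraph.cycleGraph n ↪g G)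

/-- A graph is strongly chordal if it is chordal and every even cycle of length at
least 6 has a chord joining two vertices at odd distance from each other along the
cycle. -/
def IsStronglyChordal {V : Type*} (G : SimpleGraph V) : Prop :=
  IsChordal G ∧ ∀ (v : V) (c : G.Walk v v), c.IsCycle → 6 ≤ c.length → Even c.length →
    ∃ i j, i < j ∧ j < c.length ∧ Odd (j - i) ∧ j - i ≠ 1 ∧ ¬(i = 0 ∧ j = c.length - 1) ∧
      G.Adj (c.getVert i) (c.getVert j)

/-- The ordering `u_1 ≺ ⋯ ≺ u_k ≺ v_1 ≺ ⋯ ≺ v_k ≺ x_1 ≺ ⋯ ≺ x_k ≺ z`. -/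
def hendryOrdering (k : ℕ) : List (Fin (3 * k + 1)) :=
  (List.ofFn fun i : Fin k => uv k i) ++ (List.ofFn fun i : Fin k => vv k i) ++
    (List.ofFn fun i : Fin k => xv k i) ++ [zv k]

/-
When a vertex `v` of `G_k` is eliminated, its closed neighbourhood in what remains consists of
clique vertices, which are universal there, and at most one more vertex `w`: the path neighbour
of `v` towards `z`, whose closed neighbourhood contains that of `v`. The neighbourhoods met are
thus linearly ordered, `N[v] ⊆ N[w] ⊆ S`, and `v` is simple.

The path `P_{2k+1}` is acyclic, so every cycle of `G_k` passes through the clique. A clique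
vertex on a cycle is adjacent to the vertex two steps further along, so no induced cycle of
length at least 4 exists, and to the vertex three steps further along, which is an odd chord
of any even cycle of length at least 6.
-/

open SimpleGraph

section SimpleElimination

variable {V : Type*} {G : SimpleGraph V} {S : Set V}

theorem closedNbhdIn_subset (v : V) : closedNbhdIn G S v ⊆ S := fun _ hu => hu.1

theorem isSimpleIn_of_closedNbhdIn_subset {v : V} (w : V) (hv : v ∈ S)
    (hvw : closedNbhdIn G S v ⊆ closedNbhdIn G S w)
    (huniv : ∀ x ∈ closedNbhdIn G S v, x ≠ v → x ≠ w → S ⊆ closedNbhdIn G S x) :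
    IsSimpleIn G S v := by
  have hchain : ∀ x ∈ closedNbhdIn G S v, closedNbhdIn G S x = closedNbhdIn G S v ∨
      closedNbhdIn G S x = closedNbhdIn G S w ∨ closedNbhdIn G S x = S := by
    intro x hx
    by_cases hxv : x = v
    · exact .inl (hxv ▸ rfl)
    by_cases hxw : x = w
    · exact .inr (.inl (hxw ▸ rfl))
    exact .inr (.inr ((closedNbhdIn_subset x).antisymm (huniv x hx hxv hxw)))
  refine ⟨hv, fun x hx y hy => ?_⟩
  have hwS := closedNbhdIn_subset (G := G) (S := S) w
  rcases hchain x hx with hx | hx | hx <;> rcases hchain y hy with hy | hy | hy <;>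
    rw [hx, hy] <;> first
      | exact .inl le_rfl | exact .inl hvw | exact .inr hvw | exact .inl hwS | exact .inr hwS
      | exact .inl (hvw.trans hwS) | exact .inr (hvw.trans hwS)

theorem isSimpleElimOrdering_ofFn {n : ℕ} (e : Fin n ≃ V)
    (h : ∀ v, IsSimpleIn G {u | e.symm v ≤ e.symm u} v) :
    IsSimpleElimOrdering G (List.ofFn e) := by
  refine ⟨List.nodup_ofFn.mpr e.injective, fun v => List.mem_ofFn.mpr (e.surjective v),
    fun i hi => ?_⟩
  rw [List.length_ofFn] at hi
  convert h (e ⟨i, hi⟩) using 2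
  · ext u
    simp only [List.mem_drop_iff_getElem, List.getElem_ofFn, List.length_ofFn,
      Equiv.symm_apply_apply, Fin.le_def]
    constructor
    · rintro ⟨j, hj, rfl⟩
      simp
    · intro hu
      refine ⟨e.symm u - i, by omega, ?_⟩
      rw [← e.eq_symm_apply, Fin.ext_iff]
      exact Nat.add_sub_cancel' hu
  · simp

end SimpleElimination

section Acyclic

variable {V α : Type*} [LinearOrder α] {G : SimpleGraph V}

-- The `f`-largest vertex of a cycle would have two distinct lower neighbours.
theorem isAcyclic_of_lower_neighbor_unique (f : V → α)
    (h : ∀ ⦃w u u'⦄, G.Adj w u → G.Adj w u' → f u ≤ f w → f u' ≤ f w → u = u') :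
    G.IsAcyclic := by
  classical
  intro v c hc
  obtain ⟨w, hw, hmax⟩ := c.support.toFinset.exists_max_image f ⟨v, by simp⟩
  rw [List.mem_toFinset] at hw
  have hc' := hc.rotate hw
  have hle : ∀ u ∈ (c.rotate w hw).support, f u ≤ f w := fun u hu =>
    hmax u (List.mem_toFinset.mpr ((Walk.mem_support_rotate_iff c w hw).mp hu))
  exact hc'.snd_ne_penultimate <| h (Walk.adj_snd hc'.not_nil)
    (Walk.adj_penultimate hc'.not_nil).symm (hle _ (Walk.getVert_mem_support _ _))
    (hle _ (Walk.getVert_mem_support _ _))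

theorem isAcyclic_pathGraph (n : ℕ) : (pathGraph n).IsAcyclic :=
  isAcyclic_of_lower_neighbor_unique Fin.val fun w u u' hu hu' hle hle' => by
    rw [pathGraph_adj] at hu hu'
    ext
    omega

end Acyclic

theorem cycleGraph_not_adj_add_two {n : ℕ} (i : Fin (n + 4)) :
    ¬(cycleGraph (n + 4)).Adj i (i + 2) := by
  rw [cycleGraph_adj']
  have h2 : 2 % (n + 4) = 2 := Nat.mod_eq_of_lt (by omega)
  have h2' : (n + 2) % (n + 4) = n + 2 := Nat.mod_eq_of_lt (by omega)
  simp [Fin.val_neg', h2, h2']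

def hendryEquiv (k : ℕ) : Fin (3 * k + 1) ≃ Fin (3 * k + 1) where
  toFun j := ⟨if j.val < k then k + j.val else if j.val < 2 * k then 4 * k - j.val
    else if j.val < 3 * k then j.val - 2 * k else 2 * k, by split_ifs <;> omega⟩
  invFun a := ⟨if a.val < k then 2 * k + a.val else if a.val < 2 * k then a.val - k
    else if a.val = 2 * k then 3 * k else 4 * k - a.val, by split_ifs <;> omega⟩
  left_inv j := by ext; dsimp only; split_ifs <;> omega
  right_inv a := by ext; dsimp only; split_ifs <;> omega

theorem hendryOrdering_eq_ofFn (k : ℕ) : hendryOrdering k = List.ofFn (hendryEquiv k) := by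
  refine List.ext_getElem (by simp [hendryOrdering]; ring) fun j h _ => ?_
  simp only [hendryOrdering, List.getElem_append, List.getElem_ofFn, List.length_append,
    List.length_ofFn]
  have hj : j < 3 * k + 1 := by simp [hendryOrdering] at h; omega
  ext
  simp only [hendryEquiv, Equiv.coe_fn_mk, uv, vv, xv, zv]
  split_ifs <;> simp <;> omega

namespace Gk

variable {k : ℕ}

theorem mem_closedNbhdIn_iff {S : Set (Fin (3 * k + 1))} {u v : Fin (3 * k + 1)} :
    u ∈ closedNbhdIn (Gk k) S v ↔ u ∈ S ∧
      (u.val = v.val ∨ v.val < k ∨ u.val < k ∨ v.val + 1 = u.val ∨ u.val + 1 = v.val) := by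
  refine and_congr_right fun _ => ⟨?_, fun h => ?_⟩
  · rintro (rfl | ⟨-, h⟩) <;> omega
  · by_cases huv : u = v
    · exact .inl huv
    · exact .inr ⟨Ne.symm huv, by omega⟩

theorem subset_closedNbhdIn_of_lt {S : Set (Fin (3 * k + 1))} {x : Fin (3 * k + 1)}
    (hx : x.val < k) : S ⊆ closedNbhdIn (Gk k) S x := fun _ hu =>
  mem_closedNbhdIn_iff.mpr ⟨hu, .inr (.inl hx)⟩

theorem isSimpleIn_hendry_suffix (v : Fin (3 * k + 1)) :
    IsSimpleIn (Gk k) {u | (hendryEquiv k).symm v ≤ (hendryEquiv k).symm u} v := by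
  -- the neighbour of `v` on the path towards `z`, and `z` itself for `v = z` or `v` in the clique
  let w : Fin (3 * k + 1) := ⟨if v.val < k ∨ v.val = 2 * k then 2 * k
    else if v.val < 2 * k then v.val + 1 else v.val - 1, by split_ifs <;> omega⟩
  refine isSimpleIn_of_closedNbhdIn_subset w (Set.mem_ofPred.mpr le_rfl) (fun u hu => ?_)
    fun x hx hxv hxw => subset_closedNbhdIn_of_lt ?_
  · rw [mem_closedNbhdIn_iff] at hu ⊢
    obtain ⟨huS, hvu⟩ := hu
    refine ⟨huS, ?_⟩
    simp only [Set.mem_ofPred_eq, hendryEquiv, Equiv.coe_fn_symm_mk, Fin.le_def, w] at huS ⊢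
    split_ifs at huS ⊢ <;> omega
  · obtain ⟨hxS, hvx⟩ := mem_closedNbhdIn_iff.mp hx
    simp only [Set.mem_ofPred_eq, hendryEquiv, Equiv.coe_fn_symm_mk, Fin.le_def, w, ne_eq,
      Fin.ext_iff] at hxS hxv hxw
    split_ifs at hxS hxw <;> omega

theorem pathGraph_adj_of_le {a b : Fin (3 * k + 1)} (h : (Gk k).Adj a b) (ha : k ≤ a.val)
    (hb : k ≤ b.val) : (pathGraph (3 * k + 1)).Adj a b := by
  obtain ⟨-, h⟩ := h
  rw [pathGraph_adj]
  omega

theorem exists_mem_support_lt_of_isCycle {v : Fin (3 * k + 1)} {c : (Gk k).Walk v v}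
    (hc : c.IsCycle) : ∃ u ∈ c.support, u.val < k := by
  by_contra! hall
  have hedges : ∀ e ∈ c.edges, e ∈ (pathGraph (3 * k + 1)).edgeSet := by
    intro e he
    induction e using Sym2.ind with
    | _ a b =>
      exact pathGraph_adj_of_le (c.adj_of_mem_edges he) (hall a (c.fst_mem_support_of_mem_edges he))
        (hall b (c.snd_mem_support_of_mem_edges he))
  exact isAcyclic_pathGraph _ (c.transfer _ hedges) (hc.transfer hedges)

theorem isChordal : IsChordal (Gk k) := by
  intro n hn
  obtain ⟨m, rfl⟩ : ∃ m, n = m + 4 := ⟨n - 4, by omega⟩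
  refine ⟨fun f => ?_⟩
  by_cases h : ∃ i, (f i).val < k
  · obtain ⟨i, hi⟩ := h
    have hne : i ≠ i + 2 := by simp [Fin.ext_iff, Nat.mod_eq_of_lt (show 2 < m + 4 by omega)]
    exact cycleGraph_not_adj_add_two i (f.map_adj_iff.mp ⟨f.injective.ne hne, .inl hi⟩)
  · push Not at h
    let g : cycleGraph (m + 4) →g pathGraph (3 * k + 1) :=
      ⟨f, fun hij => pathGraph_adj_of_le (f.map_adj_iff.mpr hij) (h _) (h _)⟩
    exact (isAcyclic_pathGraph _).comap g f.injective _ (cycleGraph.isCycle_cycle (n := m + 1))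

theorem exists_odd_chord {v : Fin (3 * k + 1)} {c : (Gk k).Walk v v} (hc : c.IsCycle)
    (h6 : 6 ≤ c.length) :
    ∃ i j, i < j ∧ j < c.length ∧ Odd (j - i) ∧ j - i ≠ 1 ∧ ¬(i = 0 ∧ j = c.length - 1) ∧
      (Gk k).Adj (c.getVert i) (c.getVert j) := by
  obtain ⟨u, hu, huk⟩ := exists_mem_support_lt_of_isCycle hc
  obtain ⟨i, rfl, hi⟩ := Walk.mem_support_iff_exists_getVert.mp hu
  obtain ⟨i, hi, huk⟩ : ∃ i < c.length, (c.getVert i).val < k := by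
    rcases hi.lt_or_eq with hi | rfl
    · exact ⟨i, hi, huk⟩
    · exact ⟨0, by omega, by rwa [Walk.getVert_zero, ← c.getVert_length]⟩
  have hinj := hc.getVert_injOn'
  rcases lt_or_ge (i + 3) c.length with h | h
  · refine ⟨i, i + 3, by omega, h, ⟨1, by omega⟩, by omega, by omega, ?_, .inl huk⟩
    exact hinj.ne (by simp; omega) (by simp; omega) (by omega)
  · refine ⟨i - 3, i, by omega, hi, ⟨1, by omega⟩, by omega, by omega, ?_, .inr (.inl huk)⟩
    exact hinj.ne (by simp; omega) (by simp; omega) (by omega)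

end Gk

theorem stmt1_general (k : ℕ) :
    IsSimpleElimOrdering (Gk k) (hendryOrdering k) ∧ IsStronglyChordal (Gk k) := by
  refine ⟨?_, Gk.isChordal, fun _ _ hc h6 _ => Gk.exists_odd_chord hc h6⟩
  rw [hendryOrdering_eq_ofFn]
  exact isSimpleElimOrdering_ofFn _ Gk.isSimpleIn_hendry_suffix

theorem stmt1 (k : ℕ) (hk : 1 ≤ k) :
    IsSimpleElimOrdering (Gk k) (hendryOrdering k) ∧ IsStronglyChordal (Gk k) :=
  stmt1_general k
end

section
/- For every k ≥ 1, the graph G_k = K_k ∨ P_{2k+1} has a Hamiltonian cycle that contains all heavy edges, i.e., all edges x_i u_i for 1 ≤ i ≤ k and all edges x_i v_i for 1 ≤ i ≤ k−1. -/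
/-- The set of heavy edges `A_k = {x_i u_i : 1 ≤ i ≤ k} ∪ {x_i v_i : 1 ≤ i ≤ k-1}`. -/
def heavyEdges (k : ℕ) : Set (Sym2 (Fin (3 * k + 1))) :=
  {e | (∃ i : Fin k, e = s(xv k i, uv k i)) ∨
    (∃ i : Fin (k - 1), e = s(xv k (i.castLE (Nat.sub_le k 1)), vv k (i.castLE (Nat.sub_le k 1))))}

/-! For `j < k - 1` both heavy edges at `x_j` force the cycle through `u_j x_j v_j`, so the cycle is
built from triples: it starts at `x_{k-1}`, visits `u_{k-1} z v_{k-1}`, and then zigzags outwards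
through `v_{k-2} x_{k-2} u_{k-2}`, `u_{k-3} x_{k-3} v_{k-3}`, ..., each triple joined to the next
by an edge of the path, until it returns to `x_{k-1}`, a clique vertex adjacent to everything.
Block `t` is the triple around `j = k - 1 - t`, traversed from `u_j` to `v_j` when `t` is even. -/

namespace SimpleGraph.Walk

variable {V : Type*} {G : SimpleGraph V}

theorem exists_isHamiltonianCycle_support_eq [Fintype V] [DecidableEq V] {a : V} {l : List V}
    (hchain : (a :: l ++ [a]).IsChain G.Adj) (hnodup : (a :: l).Nodup)
    (hlen : (a :: l).length = Fintype.card V) (hcard : 3 ≤ Fintype.card V) :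
    ∃ c : G.Walk a a, c.IsHamiltonianCycle ∧ c.support = a :: l ++ [a] := by
  obtain ⟨c, hsupp⟩ : ∃ c : G.Walk a a, c.support = a :: l ++ [a] :=
    ⟨(ofSupport (a :: l ++ [a]) (List.cons_ne_nil _ _) hchain).copy (by simp) (by simp),
      (support_copy _ _ _).trans (support_ofSupport _ _)⟩
  have hlength : c.length = Fintype.card V := by
    have := c.length_support; rw [hsupp] at this; simp at this hlen; omega
  have hnil : ¬ c.Nil := fun h => by rw [← length_eq_zero_iff] at h; omega
  refine ⟨c, isHamiltonianCycle_iff_isCycle_and_length_eq.mpr ⟨?_, hlength⟩, hsupp⟩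
  refine isCycle_iff_isPath_tail_and_le_length.mpr ⟨IsPath.mk' ?_, hlength ▸ hcard⟩
  rw [support_tail_of_not_nil c hnil, hsupp, List.cons_append, List.tail_cons]
  exact (List.perm_append_singleton a l).nodup_iff.mpr hnodup

end SimpleGraph.Walk

namespace Gk

variable {k : ℕ}

theorem adj_iff {a b : Fin (3 * k + 1)} :
    (Gk k).Adj a b ↔
      a.val ≠ b.val ∧ (a.val < k ∨ b.val < k ∨ a.val + 1 = b.val ∨ b.val + 1 = a.val) :=
  and_congr_left' Fin.val_ne_iff.symm

@[simp] theorem val_xv (i : Fin k) : (xv k i).val = i := rfl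
@[simp] theorem val_uv (i : Fin k) : (uv k i).val = k + i := rfl
@[simp] theorem val_zv : (zv k).val = 2 * k := rfl
@[simp] theorem val_vv (i : Fin k) : (vv k i).val = 3 * k - i := rfl

def xLast (k : ℕ) : Fin (3 * k + 1) := ⟨k - 1, by omega⟩

@[simp] theorem val_xLast : (xLast k).val = k - 1 := rfl

def mid (k : ℕ) (t : Fin k) : Fin (3 * k + 1) := if t.val = 0 then zv k else xv k t.rev

theorem val_mid (t : Fin k) : (mid k t).val = if t.val = 0 then 2 * k else k - 1 - t := by
  unfold mid; split_ifs <;> simp [Fin.val_rev]; omega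

def block (k : ℕ) (t : Fin k) : List (Fin (3 * k + 1)) :=
  if t.val % 2 = 0 then [uv k t.rev, mid k t, vv k t.rev] else [vv k t.rev, mid k t, uv k t.rev]

def zigzag (k : ℕ) : List (Fin (3 * k + 1)) := (List.finRange k).flatMap (block k)

theorem mem_block {t : Fin k} {v : Fin (3 * k + 1)} :
    v ∈ block k t ↔ v = uv k t.rev ∨ v = mid k t ∨ v = vv k t.rev := by
  unfold block; split_ifs <;> simp [or_comm, or_left_comm]

theorem length_block (t : Fin k) : (block k t).length = 3 := by
  unfold block; split_ifs <;> rfl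

theorem nodup_block (t : Fin k) : (block k t).Nodup := by
  have := t.isLt
  unfold block; split_ifs <;> simp [Fin.ext_iff, val_mid, Fin.val_rev] <;> (try split_ifs) <;> omega

theorem isChain_block (t : Fin k) : (block k t).IsChain (Gk k).Adj := by
  have := t.isLt
  unfold block; split_ifs <;> simp [adj_iff, val_mid, Fin.val_rev] <;> (try split_ifs) <;> omega

theorem adj_block_succ {s t : Fin k} (hst : s.val + 1 = t.val) :
    ∀ x ∈ (block k s).getLast?, ∀ y ∈ (block k t).head?, (Gk k).Adj x y := by
  have := t.isLt
  unfold block; split_ifs <;> simp [adj_iff, Fin.val_rev] <;> omega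

theorem eq_of_mem_block_of_mem_block {s t : Fin k} {v : Fin (3 * k + 1)}
    (hs : v ∈ block k s) (ht : v ∈ block k t) : s = t := by
  rw [mem_block] at hs ht
  have := s.isLt; have := t.isLt
  ext
  rcases hs with rfl | rfl | rfl <;> rcases ht with h | h | h <;>
    simp only [Fin.ext_iff, val_uv, val_vv, val_mid, Fin.val_rev] at h <;>
    (try split_ifs at h) <;> omega

theorem xLast_not_mem_block (t : Fin k) : xLast k ∉ block k t := by
  have := t.isLt
  rw [mem_block]; simp only [Fin.ext_iff, val_uv, val_vv, val_mid, Fin.val_rev, val_xLast]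
  split_ifs <;> omega

theorem isChain_zigzag : (zigzag k).IsChain (Gk k).Adj := by
  rw [zigzag, List.flatMap_def, List.isChain_flatten, List.isChain_map, List.isChain_iff_getElem]
  · refine ⟨by simpa using isChain_block, fun i hi => adj_block_succ ?_⟩
    simp
  · simp [← List.length_eq_zero_iff, length_block]

theorem nodup_xLast_cons_zigzag : (xLast k :: zigzag k).Nodup := by
  refine List.nodup_cons.mpr ⟨by simp [zigzag, xLast_not_mem_block], ?_⟩
  refine List.nodup_flatMap.mpr ⟨fun t _ => nodup_block t, ?_⟩
  exact (List.nodup_finRange k).pairwise_of_forall_ne fun s _ t _ hst v hs ht =>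
    hst (eq_of_mem_block_of_mem_block hs ht)

theorem length_zigzag : (zigzag k).length = 3 * k := by
  simp [zigzag, length_block, mul_comm]

theorem isChain_cycle (hk : 1 ≤ k) : (xLast k :: zigzag k ++ [xLast k]).IsChain (Gk k).Adj := by
  have hadj : ∀ v ∈ zigzag k, (Gk k).Adj (xLast k) v := fun v hv =>
    ⟨fun h => (List.nodup_cons.mp nodup_xLast_cons_zigzag).1 (h ▸ hv),
      Or.inl (by simp; omega)⟩
  have hne : zigzag k ≠ [] := by simp [← List.length_eq_zero_iff, length_zigzag]; omega
  rw [List.cons_append, List.isChain_cons, List.isChain_append, List.head?_append_of_ne_nil _ hne]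
  refine ⟨fun y hy => hadj y (List.mem_of_head? hy), isChain_zigzag, .singleton _, ?_⟩
  simp only [List.head?_cons, Option.mem_def, Option.some.injEq]
  rintro x hx _ rfl
  exact (hadj x (List.mem_of_getLast? hx)).symm

theorem block_infix_cycle (t : Fin k) : block k t <:+: xLast k :: zigzag k ++ [xLast k] :=
  (List.infix_of_mem_flatten (List.mem_map_of_mem (List.mem_finRange t))).trans
    ⟨[xLast k], [xLast k], by simp [zigzag, List.flatMap_def]⟩

theorem exists_infix_block_rev_of_lt (i : Fin k) (hi : i.val + 1 < k) :
    (∃ x y, s(x, y) = s(xv k i, uv k i) ∧ [x, y] <:+: block k i.rev) ∧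
      (∃ x y, s(x, y) = s(xv k i, vv k i) ∧ [x, y] <:+: block k i.rev) := by
  have hmid : mid k i.rev = xv k i := by rw [mid, if_neg (by simp; omega), Fin.rev_rev]
  unfold block; rw [Fin.rev_rev, hmid]; split_ifs
  · exact ⟨⟨_, _, Sym2.eq_swap, [], [vv k i], rfl⟩, ⟨_, _, rfl, [uv k i], [], rfl⟩⟩
  · exact ⟨⟨_, _, rfl, [vv k i], [], rfl⟩, ⟨_, _, Sym2.eq_swap, [], [uv k i], rfl⟩⟩

theorem xLast_uv_prefix_cycle (hk : 1 ≤ k) :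
    [xLast k, uv k ⟨k - 1, by omega⟩] <+: xLast k :: zigzag k ++ [xLast k] := by
  obtain ⟨n, rfl⟩ := Nat.exists_eq_add_of_le' hk
  rw [zigzag, List.finRange_succ, List.flatMap_cons]
  exact ⟨_, rfl⟩

theorem exists_infix_cycle_of_mem_heavyEdges (hk : 1 ≤ k) {e : Sym2 (Fin (3 * k + 1))}
    (he : e ∈ heavyEdges k) :
    ∃ x y, e = s(x, y) ∧ [x, y] <:+: xLast k :: zigzag k ++ [xLast k] := by
  rcases he with ⟨i, rfl⟩ | ⟨i, rfl⟩
  · by_cases hi : i.val + 1 < k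
    · obtain ⟨x, y, hxy, hinf⟩ := (exists_infix_block_rev_of_lt i hi).1
      exact ⟨x, y, hxy.symm, hinf.trans (block_infix_cycle _)⟩
    · refine ⟨_, _, ?_, xLast_uv_prefix_cycle hk |>.isInfix⟩
      congr 1 <;> ext <;> simp [xLast] <;> omega
  · obtain ⟨x, y, hxy, hinf⟩ := (exists_infix_block_rev_of_lt (i.castLE (Nat.sub_le k 1))
      (by have := i.isLt; simp only [Fin.val_castLE]; omega)).2
    exact ⟨x, y, hxy.symm, hinf.trans (block_infix_cycle _)⟩

end Gk

/-- stmt2 : heavy Hamiltonian cycle -/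
theorem stmt2 (k : ℕ) (hk : 1 ≤ k) :
    ∃ (a : Fin (3 * k + 1)) (c : (Gk k).Walk a a), c.IsHamiltonianCycle ∧
      ∀ e ∈ heavyEdges k, e ∈ c.edges := by
  obtain ⟨c, hc, hsupp⟩ := SimpleGraph.Walk.exists_isHamiltonianCycle_support_eq
    (Gk.isChain_cycle hk) Gk.nodup_xLast_cons_zigzag
    (by simp [Gk.length_zigzag]) (by simp; omega)
  refine ⟨_, c, hc, fun e he => ?_⟩
  obtain ⟨x, y, rfl, hxy⟩ := Gk.exists_infix_cycle_of_mem_heavyEdges hk he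
  exact c.infix_support_iff_mem_edges.mp (.inl (hsupp ▸ hxy))
end

section
/- For every k ≥ 2, the graph G_k = K_k ∨ P_{2k+1} contains a heavy cycle (a cycle using every heavy edge) whose vertex set is V(G_k) \ {v_k, z}, i.e., a cycle on all vertices except v_k and z that contains all heavy edges. -/
/-!
The cycle is `x_{k-1} u_{k-1} u_{k-2} x_{k-2} v_{k-2} v_{k-3} x_{k-3} u_{k-3} u_{k-4} ⋯ x_0 w_0`,
closed by the clique edge `w_0 x_{k-1}`: for `i = k-1, …, 0` it visits the block
`x_i, w_i, w_{i-1}` (only `x_0, w_0` for `i = 0`), where `w = u` if `k - 1 - i` is even and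
`w = v` otherwise. Consecutive blocks lie on opposite halves of the path, so each `x_i` sits
between `u_i` and `v_i` (except `x_{k-1}`, which needs only `u_{k-1}`), and the pairs `w_i w_{i-1}` are
consecutive path vertices which together cover every path vertex except `z` and `v_{k-1}`.
-/

namespace SimpleGraph

theorem exists_isCycle_of_injOn {V : Type*} {G : SimpleGraph V} (f : ℕ → V) {n : ℕ}
    (hn : 3 ≤ n) (hf : Set.InjOn f (Set.Iio n))
    (hadj : ∀ t, t + 1 < n → G.Adj (f t) (f (t + 1))) (hclose : G.Adj (f (n - 1)) (f 0)) :
    ∃ c : G.Walk (f 0) (f 0), c.IsCycle ∧ (∀ x, x ∈ c.support ↔ ∃ t < n, f t = x) ∧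
      ∀ t, t + 1 < n → s(f t, f (t + 1)) ∈ c.edges := by
  set l := (List.range n).map f
  have hne : l ≠ [] := by simp [l]; omega
  have hchain : l.IsChain G.Adj := by
    rw [List.isChain_map, List.isChain_range]
    exact fun t ht => hadj t (by omega)
  have hnodup : l.Nodup := List.nodup_range.map_on fun a ha b hb h => by
    simp only [List.mem_range] at ha hb
    exact hf ha hb h
  let p : G.Walk (f 0) (f (n - 1)) :=
    (Walk.ofSupport l hne hchain).copy (by simp [l, List.head_map]) (by simp [l, List.getLast_map])
  have hp : p.support = l := by simp [p]
  refine ⟨p.append hclose.toWalk, (Walk.IsPath.mk' (hp ▸ hnodup)).isCycle_append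
    hclose.isPath_toWalk ?_ (.inl (by simp [p, l]; omega)), fun x => ?_, fun t ht => ?_⟩
  · rw [hp, hclose.support_toWalk, List.tail_cons, List.disjoint_singleton]
    rw [← List.cons_head_tail hne, List.nodup_cons] at hnodup
    simpa [l, List.head_map] using hnodup.1
  · simp only [Walk.support_append, hp, hclose.support_toWalk, List.tail_cons, List.mem_append,
      List.mem_singleton, l, List.mem_map, List.mem_range]
    exact ⟨by rintro (h | rfl) <;> [exact h; exact ⟨0, by omega, rfl⟩], .inl⟩
  · rw [Walk.edges_append, List.mem_append, Walk.edges_eq_zipWith_support, hp]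
    exact .inl (List.mem_iff_getElem.2 ⟨t, by simp [l]; omega, by simp [l]⟩)

end SimpleGraph

/-- The label of `u_j` (if `onU`) or of `v_j` in `Fin (3 * k + 1)`. -/
def pathLabel (k : ℕ) (onU : Bool) (j : ℕ) : ℕ :=
  if onU then k + j else 3 * k - j

/-- The label of the vertex at position `t` of the cycle; position `3 q + r` lies in the block of
`x_{k-1-q}`. -/
def cycleLabel (k t : ℕ) : ℕ :=
  if t % 3 = 0 then k - 1 - t / 3
  else if t % 3 = 1 then pathLabel k (t / 3 % 2 == 0) (k - 1 - t / 3)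
  else pathLabel k (t / 3 % 2 == 0) (k - 2 - t / 3)

section CycleLabel

variable {k t : ℕ}

theorem cycleLabel_le : cycleLabel k t ≤ 3 * k := by
  simp only [cycleLabel, pathLabel, beq_iff_eq]; split_ifs <;> omega

theorem cycleLabel_ne (ht : t < 3 * k - 1) :
    cycleLabel k t ≠ 2 * k ∧ cycleLabel k t ≠ 2 * k + 1 := by
  simp only [cycleLabel, pathLabel, beq_iff_eq]; split_ifs <;> omega

theorem cycleLabel_injOn : Set.InjOn (cycleLabel k) (Set.Iio (3 * k - 1)) := by
  intro t ht s hs h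
  simp only [Set.mem_Iio] at ht hs
  simp only [cycleLabel, pathLabel, beq_iff_eq] at h; split_ifs at h <;> omega

theorem cycleLabel_three_mul (q : ℕ) : cycleLabel k (3 * q) = k - 1 - q := by
  simp [cycleLabel]

theorem cycleLabel_three_mul_add_one (q : ℕ) :
    cycleLabel k (3 * q + 1) = pathLabel k (q % 2 == 0) (k - 1 - q) := by
  simp [cycleLabel, Nat.mul_add_div]

theorem cycleLabel_three_mul_add_two (q : ℕ) :
    cycleLabel k (3 * q + 2) = pathLabel k (q % 2 == 0) (k - 2 - q) := by
  simp [cycleLabel, Nat.mul_add_div]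

/-- `x_i` is followed by `w_i` in its own block and preceded by the other `w_i` at the end of the
previous block. -/
theorem exists_cycleLabel_heavy {i : ℕ} (onU : Bool) (hi : i < k) (hside : onU ∨ i < k - 1) :
    ∃ t, t + 1 < 3 * k - 1 ∧ s(cycleLabel k t, cycleLabel k (t + 1)) = s(i, pathLabel k onU i) := by
  by_cases hs : ((k - 1 - i) % 2 == 0) = onU
  · refine ⟨3 * (k - 1 - i), by omega, ?_⟩
    rw [cycleLabel_three_mul, cycleLabel_three_mul_add_one, Nat.sub_sub_self (by omega), hs]
  · obtain ⟨q, hq⟩ : ∃ q, k - 1 - i = q + 1 := ⟨k - 2 - i, by cases onU <;> simp_all <;> omega⟩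
    have hs' : (q % 2 == 0) = onU := by cases onU <;> simp_all <;> omega
    refine ⟨3 * q + 2, by omega, ?_⟩
    rw [cycleLabel_three_mul_add_two, show 3 * q + 2 + 1 = 3 * (q + 1) by ring,
      cycleLabel_three_mul, hs', Sym2.eq_swap]
    congr 2 <;> omega

theorem exists_cycleLabel_eq {x : ℕ} (hx : x ≤ 3 * k) (hz : x ≠ 2 * k) (hv : x ≠ 2 * k + 1) :
    ∃ t < 3 * k - 1, cycleLabel k t = x := by
  rcases lt_or_ge x k with hxk | hxk
  · exact ⟨3 * (k - 1 - x), by omega, by rw [cycleLabel_three_mul]; omega⟩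
  obtain ⟨j, onU, hj, hside, rfl⟩ :
      ∃ (j : ℕ) (onU : Bool), j < k ∧ (onU ∨ j < k - 1) ∧ pathLabel k onU j = x := by
    rcases lt_or_ge x (2 * k) with hxu | hxv
    · exact ⟨x - k, true, by omega, by simp, by simp [pathLabel]; omega⟩
    · exact ⟨3 * k - x, false, by omega, by simp; omega, by simp [pathLabel]; omega⟩
  obtain ⟨t, ht, he⟩ := exists_cycleLabel_heavy onU hj hside
  rcases Sym2.mem_iff.1 (he ▸ Sym2.mem_mk_right j (pathLabel k onU j)) with h | h
  exacts [⟨t, by omega, h.symm⟩, ⟨t + 1, ht, h.symm⟩]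

end CycleLabel

def cycleVertex (k t : ℕ) : Fin (3 * k + 1) :=
  ⟨cycleLabel k t, Nat.lt_succ_of_le cycleLabel_le⟩

section CycleVertex

variable {k t : ℕ}

theorem cycleVertex_injOn : Set.InjOn (cycleVertex k) (Set.Iio (3 * k - 1)) :=
  fun _ ha _ hb h => cycleLabel_injOn ha hb (congrArg Fin.val h)

theorem gk_adj_cycleVertex_succ (ht : t + 1 < 3 * k - 1) :
    (Gk k).Adj (cycleVertex k t) (cycleVertex k (t + 1)) := by
  refine ⟨fun h => by simpa using cycleVertex_injOn (by simp; omega) (by simpa using ht) h, ?_⟩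
  simp only [cycleVertex, cycleLabel, pathLabel, beq_iff_eq]
  split_ifs <;> omega

theorem gk_adj_cycleVertex_last (hk : 2 ≤ k) :
    (Gk k).Adj (cycleVertex k (3 * k - 1 - 1)) (cycleVertex k 0) := by
  refine ⟨fun h => ?_, .inr (.inl (by simp [cycleVertex, cycleLabel]; omega))⟩
  have := cycleVertex_injOn (by simp; omega) (by simp; omega) h
  omega

theorem exists_cycleVertex_heavy {i : ℕ} (onU : Bool) (hi : i < k) (hside : onU ∨ i < k - 1)
    {x w : Fin (3 * k + 1)} (hx : x.val = i) (hw : w.val = pathLabel k onU i) :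
    ∃ t, t + 1 < 3 * k - 1 ∧ s(cycleVertex k t, cycleVertex k (t + 1)) = s(x, w) := by
  obtain ⟨t, ht, he⟩ := exists_cycleLabel_heavy onU hi hside
  refine ⟨t, ht, Sym2.map.injective Fin.val_injective ?_⟩
  simp [cycleVertex, he, hx, hw]

theorem exists_cycleVertex_eq_iff (x : Fin (3 * k + 1)) :
    (∃ t < 3 * k - 1, cycleVertex k t = x) ↔ x.val ≠ 2 * k ∧ x.val ≠ 2 * k + 1 := by
  simp only [Fin.ext_iff, cycleVertex]
  constructor
  · rintro ⟨t, ht, hx⟩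
    exact hx ▸ cycleLabel_ne ht
  · rintro ⟨hz, hv⟩
    exact exists_cycleLabel_eq (by omega) hz hv

end CycleVertex

/-- stmt3 -/
theorem stmt3 (k : ℕ) (hk : 2 ≤ k) :
    ∃ (a : Fin (3 * k + 1)) (c : (Gk k).Walk a a), c.IsCycle ∧
      (∀ e ∈ heavyEdges k, e ∈ c.edges) ∧
      {x | x ∈ c.support} = Set.univ \ {vv k ⟨k - 1, by omega⟩, zv k} := by
  obtain ⟨c, hc, hsupport, hedges⟩ := SimpleGraph.exists_isCycle_of_injOn (G := Gk k)
    (cycleVertex k) (by omega) cycleVertex_injOn (fun _ => gk_adj_cycleVertex_succ)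
    (gk_adj_cycleVertex_last hk)
  refine ⟨_, c, hc, ?_, ?_⟩
  · rintro e (⟨i, rfl⟩ | ⟨i, rfl⟩)
    · obtain ⟨t, ht, he⟩ := exists_cycleVertex_heavy true i.isLt (.inl rfl)
        (x := xv k i) (w := uv k i) rfl rfl
      exact he ▸ hedges t ht
    · obtain ⟨t, ht, he⟩ := exists_cycleVertex_heavy false (by omega) (.inr i.isLt)
        (x := xv k (i.castLE (Nat.sub_le k 1))) (w := vv k (i.castLE (Nat.sub_le k 1))) rfl rfl
      exact he ▸ hedges t ht
  · ext x
    rw [Set.mem_ofPred_eq, hsupport, exists_cycleVertex_eq_iff]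
    simp only [Set.mem_sdiff, Set.mem_univ, Set.mem_insert_iff, Set.mem_singleton_iff,
      Fin.ext_iff, vv, zv]
    grind
end

section
/- For every k ≥ 3, the graph G_k = K_k ∨ P_{2k+1} contains no heavy cycle whose vertex set is V(G_k) \ {z}, and no heavy cycle whose vertex set is V(G_k) \ {v_k}. -/
open SimpleGraph

namespace SimpleGraph.Walk

variable {V : Type*} {G : SimpleGraph V} {u v w x y t : V}

theorem mem_of_mem_support_of_adj_closed (p : G.Walk u w) {S : Set V}
    (hS : ∀ a ∈ S, ∀ b, p.toSubgraph.Adj a b → b ∈ S) (hvS : v ∈ S) (hv : v ∈ p.support) :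
    ∀ b ∈ p.support, b ∈ S := by
  induction p generalizing v with
  | nil =>
    simp_all
  | @cons u u' w h q ih =>
    have hq : ∀ a ∈ S, ∀ b, q.toSubgraph.Adj a b → b ∈ S :=
      fun a ha b hab => hS a ha b (Subgraph.sup_adj.mpr (Or.inr hab))
    have huu' : (cons h q).toSubgraph.Adj u u' :=
      Subgraph.sup_adj.mpr (Or.inl (G.subgraphOfAdj_adj_self h))
    rw [support_cons, List.mem_cons] at hv
    have hq_sub : ∀ b ∈ q.support, b ∈ S := by
      rcases hv with rfl | hv
      · exact ih hq (hS v hvS u' huu') q.start_mem_support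
      · exact ih hq hvS hv
    intro b hb
    rw [support_cons, List.mem_cons] at hb
    rcases hb with rfl | hb
    · exact hS u' (hq_sub u' q.start_mem_support) b huu'.symm
    · exact hq_sub b hb

namespace IsCycle

variable {p : G.Walk u u}

theorem neighborSet_toSubgraph_eq_pair (hp : p.IsCycle) (hx : p.toSubgraph.Adj v x)
    (hy : p.toSubgraph.Adj v y) (hxy : x ≠ y) : p.toSubgraph.neighborSet v = {x, y} := by
  have hv : v ∈ p.support := p.mem_verts_toSubgraph.mp hx.fst_mem
  refine (Set.eq_of_subset_of_ncard_le (t := p.toSubgraph.neighborSet v)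
    (Set.insert_subset_iff.mpr ⟨hx, Set.singleton_subset_iff.mpr hy⟩) ?_
    p.finite_neighborSet_toSubgraph).symm
  rw [hp.ncard_neighborSet_toSubgraph_eq_two hv, Set.ncard_pair hxy]

theorem eq_or_eq_of_toSubgraph_adj (hp : p.IsCycle) (hx : p.toSubgraph.Adj v x)
    (hy : p.toSubgraph.Adj v y) (hxy : x ≠ y) (ht : p.toSubgraph.Adj v t) : t = x ∨ t = y := by
  have ht' : t ∈ p.toSubgraph.neighborSet v := ht
  rwa [hp.neighborSet_toSubgraph_eq_pair hx hy hxy] at ht'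

theorem toSubgraph_adj_of_forall_eq_or_eq (hp : p.IsCycle) (hv : v ∈ p.support)
    (h : ∀ t, p.toSubgraph.Adj v t → t = x ∨ t = y) :
    p.toSubgraph.Adj v x ∧ p.toSubgraph.Adj v y := by
  have hN : p.toSubgraph.neighborSet v = {x, y} := by
    refine Set.eq_of_subset_of_ncard_le h ?_ (Set.toFinite _)
    rw [hp.ncard_neighborSet_toSubgraph_eq_two hv]
    exact (Set.ncard_insert_le _ _).trans (by simp)
  have hx : x ∈ p.toSubgraph.neighborSet v := by simp [hN]
  have hy : y ∈ p.toSubgraph.neighborSet v := by simp [hN]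
  exact ⟨hx, hy⟩

/-- Cycle vertices have degree two, so such an `S` is closed under the cycle's adjacency. -/
theorem mem_of_mem_support_of_forall_exists_adj (hp : p.IsCycle) {S : Set V}
    (hS : ∀ a ∈ S, ∃ x ∈ S, ∃ y ∈ S, x ≠ y ∧ p.toSubgraph.Adj a x ∧ p.toSubgraph.Adj a y)
    (hvS : v ∈ S) (hv : v ∈ p.support) : ∀ b ∈ p.support, b ∈ S := by
  refine p.mem_of_mem_support_of_adj_closed (fun a ha b hab => ?_) hvS hv
  obtain ⟨x, hx, y, hy, hxy, hax, hay⟩ := hS a ha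
  rcases hp.eq_or_eq_of_toSubgraph_adj hax hay hxy hab with rfl | rfl <;> assumption

end IsCycle

end SimpleGraph.Walk

theorem Gk_adj_iff {k : ℕ} {v w : Fin (3 * k + 1)} :
    (Gk k).Adj v w ↔
      v.val ≠ w.val ∧ (v.val < k ∨ w.val < k ∨ v.val + 1 = w.val ∨ w.val + 1 = v.val) := by
  simp [Gk, Fin.ext_iff]

section HeavyCycle

variable {k : ℕ} {a : Fin (3 * k + 1)} {c : (Gk k).Walk a a}

theorem toSubgraph_adj_of_mem_heavyEdges (hheavy : ∀ e ∈ heavyEdges k, e ∈ c.edges)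
    {v w : Fin (3 * k + 1)} (h : s(v, w) ∈ heavyEdges k) : c.toSubgraph.Adj v w := by
  rw [← Subgraph.mem_edgeSet, Walk.mem_edges_toSubgraph]
  exact hheavy _ h

theorem toSubgraph_adj_x_u (hheavy : ∀ e ∈ heavyEdges k, e ∈ c.edges)
    {v w : Fin (3 * k + 1)} (hv : v.val < k) (hw : w.val = k + v.val) : c.toSubgraph.Adj v w :=
  toSubgraph_adj_of_mem_heavyEdges hheavy
    (Or.inl ⟨⟨v.val, hv⟩, by rw [show w = uv k ⟨v.val, hv⟩ from Fin.ext hw]; rfl⟩)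

theorem toSubgraph_adj_x_v (hheavy : ∀ e ∈ heavyEdges k, e ∈ c.edges)
    {v w : Fin (3 * k + 1)} (hv : v.val + 1 < k) (hw : w.val = 3 * k - v.val) :
    c.toSubgraph.Adj v w :=
  toSubgraph_adj_of_mem_heavyEdges hheavy
    (Or.inr ⟨⟨v.val, by omega⟩, by rw [show w = vv k ⟨v.val, by omega⟩ from Fin.ext hw]; rfl⟩)

theorem val_eq_of_toSubgraph_adj_x (hc : c.IsCycle) (hheavy : ∀ e ∈ heavyEdges k, e ∈ c.edges)
    {v t : Fin (3 * k + 1)} (h : c.toSubgraph.Adj v t) (ht : t.val + 1 < k) :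
    v.val = k + t.val ∨ v.val = 3 * k - t.val := by
  obtain ⟨u, hu⟩ : ∃ u : Fin (3 * k + 1), u.val = k + t.val := ⟨⟨_, by omega⟩, rfl⟩
  obtain ⟨w, hw⟩ : ∃ w : Fin (3 * k + 1), w.val = 3 * k - t.val := ⟨⟨_, by omega⟩, rfl⟩
  have huw : u ≠ w := by rw [Ne, Fin.ext_iff]; omega
  rcases hc.eq_or_eq_of_toSubgraph_adj (toSubgraph_adj_x_u hheavy (by omega) hu)
    (toSubgraph_adj_x_v hheavy ht hw) huw h.symm with rfl | rfl <;> omega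

theorem support_ne_compl_vv_last (hk : 2 ≤ k) (hc : c.IsCycle)
    (hheavy : ∀ e ∈ heavyEdges k, e ∈ c.edges) :
    {x | x ∈ c.support} ≠ Set.univ \ {vv k ⟨k - 1, by omega⟩} := by
  intro hs
  have hsupp : ∀ t : Fin (3 * k + 1), t ∈ c.support ↔ t.val ≠ 2 * k + 1 := by
    simpa [Fin.ext_iff, vv, show 3 * k - (k - 1) = 2 * k + 1 by omega] using Set.ext_iff.mp hs
  obtain ⟨y, hy⟩ : ∃ y : Fin (3 * k + 1), y.val = k - 1 := ⟨⟨_, by omega⟩, rfl⟩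
  obtain ⟨w, hw⟩ : ∃ w : Fin (3 * k + 1), w.val = 2 * k - 1 := ⟨⟨_, by omega⟩, rfl⟩
  obtain ⟨z, hz⟩ : ∃ z : Fin (3 * k + 1), z.val = 2 * k := ⟨⟨_, by omega⟩, rfl⟩
  have hyw := toSubgraph_adj_x_u hheavy (v := y) (w := w) (by omega) (by omega)
  have hz_nbrs : ∀ t, c.toSubgraph.Adj z t → t = y ∨ t = w := fun t ht => by
    have hG := Gk_adj_iff.mp (c.toSubgraph.adj_sub ht)
    have htv := (hsupp t).mp (c.mem_verts_toSubgraph.mp ht.snd_mem)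
    have hx := val_eq_of_toSubgraph_adj_x hc hheavy ht
    simp only [Fin.ext_iff]
    omega
  obtain ⟨hzy, hzw⟩ := hc.toSubgraph_adj_of_forall_eq_or_eq ((hsupp z).mpr (by omega)) hz_nbrs
  obtain ⟨x₀, hx₀⟩ : ∃ x : Fin (3 * k + 1), x.val = 0 := ⟨⟨0, by omega⟩, rfl⟩
  have hx₀S := hc.mem_of_mem_support_of_forall_exists_adj (S := {y, w, z}) ?_ (v := y) (by simp)
    ((hsupp y).mpr (by omega)) x₀ ((hsupp x₀).mpr (by omega))
  · simp only [Set.mem_insert_iff, Set.mem_singleton_iff, Fin.ext_iff] at hx₀S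
    omega
  · have hne : y ≠ w ∧ y ≠ z ∧ w ≠ z := by simp only [Ne, Fin.ext_iff]; omega
    rintro _ (rfl | rfl | rfl)
    · exact ⟨w, by simp, z, by simp, hne.2.2, hyw, hzy.symm⟩
    · exact ⟨y, by simp, z, by simp, hne.2.1, hyw.symm, hzw.symm⟩
    · exact ⟨y, by simp, w, by simp, hne.1, hzy, hzw⟩

/-- Without `z`, the vertex `v_k` can only use `x_k` besides its path neighbour, so `x_k` too is
saturated by `u_k` and `v_k`. -/
theorem val_eq_of_toSubgraph_adj_x_of_support_eq (hk : 2 ≤ k) (hc : c.IsCycle)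
    (hheavy : ∀ e ∈ heavyEdges k, e ∈ c.edges) (hs : {x | x ∈ c.support} = Set.univ \ {zv k})
    {v t : Fin (3 * k + 1)} (h : c.toSubgraph.Adj v t) (ht : t.val < k) :
    v.val = k + t.val ∨ v.val = 3 * k - t.val := by
  by_cases ht' : t.val + 1 < k
  · exact val_eq_of_toSubgraph_adj_x hc hheavy h ht'
  have hsupp : ∀ t : Fin (3 * k + 1), t ∈ c.support ↔ t.val ≠ 2 * k := by
    simpa [Fin.ext_iff, zv] using Set.ext_iff.mp hs
  obtain ⟨w, hw⟩ : ∃ w : Fin (3 * k + 1), w.val = 2 * k - 1 := ⟨⟨_, by omega⟩, rfl⟩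
  obtain ⟨s, hsv⟩ : ∃ s : Fin (3 * k + 1), s.val = 2 * k + 1 := ⟨⟨_, by omega⟩, rfl⟩
  obtain ⟨s', hs'⟩ : ∃ s' : Fin (3 * k + 1), s'.val = 2 * k + 2 := ⟨⟨_, by omega⟩, rfl⟩
  have hs_nbrs : ∀ r, c.toSubgraph.Adj s r → r = t ∨ r = s' := fun r hr => by
    have hG := Gk_adj_iff.mp (c.toSubgraph.adj_sub hr)
    have hrv := (hsupp r).mp (c.mem_verts_toSubgraph.mp hr.snd_mem)
    have hx := val_eq_of_toSubgraph_adj_x hc hheavy hr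
    simp only [Fin.ext_iff]
    omega
  have hst := (hc.toSubgraph_adj_of_forall_eq_or_eq ((hsupp s).mpr (by omega))
    hs_nbrs).1
  have htw := toSubgraph_adj_x_u hheavy (v := t) (w := w) ht (by omega)
  rcases hc.eq_or_eq_of_toSubgraph_adj htw hst.symm (by rw [Ne, Fin.ext_iff]; omega) h.symm
    with rfl | rfl <;> omega

theorem support_ne_compl_zv (hk : 3 ≤ k) (hc : c.IsCycle)
    (hheavy : ∀ e ∈ heavyEdges k, e ∈ c.edges) :
    {x | x ∈ c.support} ≠ Set.univ \ {zv k} := by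
  intro hs
  have hsupp : ∀ t : Fin (3 * k + 1), t ∈ c.support ↔ t.val ≠ 2 * k := by
    simpa [Fin.ext_iff, zv] using Set.ext_iff.mp hs
  have hnbr : ∀ v t, c.toSubgraph.Adj v t → t.val ≠ 2 * k ∧
      (t.val < k → v.val = k + t.val ∨ v.val = 3 * k - t.val) ∧ v.val ≠ t.val ∧
      (v.val < k ∨ t.val < k ∨ v.val + 1 = t.val ∨ t.val + 1 = v.val) := fun v t h =>
    ⟨(hsupp t).mp (c.mem_verts_toSubgraph.mp h.snd_mem),
      val_eq_of_toSubgraph_adj_x_of_support_eq (by omega) hc hheavy hs h,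
      Gk_adj_iff.mp (c.toSubgraph.adj_sub h)⟩
  obtain ⟨x₀, hx₀⟩ : ∃ x : Fin (3 * k + 1), x.val = 0 := ⟨⟨_, by omega⟩, rfl⟩
  obtain ⟨x₁, hx₁⟩ : ∃ x : Fin (3 * k + 1), x.val = 1 := ⟨⟨_, by omega⟩, rfl⟩
  obtain ⟨u₀, hu₀⟩ : ∃ x : Fin (3 * k + 1), x.val = k := ⟨⟨_, by omega⟩, rfl⟩
  obtain ⟨u₁, hu₁⟩ : ∃ x : Fin (3 * k + 1), x.val = k + 1 := ⟨⟨_, by omega⟩, rfl⟩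
  obtain ⟨v₀, hv₀⟩ : ∃ x : Fin (3 * k + 1), x.val = 3 * k := ⟨⟨_, by omega⟩, rfl⟩
  obtain ⟨v₁, hv₁⟩ : ∃ x : Fin (3 * k + 1), x.val = 3 * k - 1 := ⟨⟨_, by omega⟩, rfl⟩
  have hx₀u₀ := toSubgraph_adj_x_u hheavy (v := x₀) (w := u₀) (by omega) (by omega)
  have hx₁u₁ := toSubgraph_adj_x_u hheavy (v := x₁) (w := u₁) (by omega) (by omega)
  have hx₀v₀ := toSubgraph_adj_x_v hheavy (v := x₀) (w := v₀) (by omega) (by omega)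
  have hx₁v₁ := toSubgraph_adj_x_v hheavy (v := x₁) (w := v₁) (by omega) (by omega)
  have hu₀u₁ := (hc.toSubgraph_adj_of_forall_eq_or_eq (x := x₀) (y := u₁)
    ((hsupp u₀).mpr (by omega))
    fun t ht => by have := hnbr _ _ ht; simp only [Fin.ext_iff] at this ⊢; omega).2
  have hv₀v₁ := (hc.toSubgraph_adj_of_forall_eq_or_eq (x := x₀) (y := v₁)
    ((hsupp v₀).mpr (by omega))
    fun t ht => by have := hnbr _ _ ht; simp only [Fin.ext_iff] at this ⊢; omega).2
  obtain ⟨w, hw⟩ : ∃ w : Fin (3 * k + 1), w.val = 2 * k - 1 := ⟨⟨_, by omega⟩, rfl⟩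
  have hwS := hc.mem_of_mem_support_of_forall_exists_adj (S := {x₀, x₁, u₀, u₁, v₀, v₁}) ?_
    (v := x₀) (by simp) ((hsupp x₀).mpr (by omega)) w
    ((hsupp w).mpr (by omega))
  · simp only [Set.mem_insert_iff, Set.mem_singleton_iff, Fin.ext_iff] at hwS
    omega
  · rintro _ (rfl | rfl | rfl | rfl | rfl | rfl)
    · exact ⟨u₀, by simp, v₀, by simp, by rw [Ne, Fin.ext_iff]; omega, hx₀u₀, hx₀v₀⟩
    · exact ⟨u₁, by simp, v₁, by simp, by rw [Ne, Fin.ext_iff]; omega, hx₁u₁, hx₁v₁⟩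
    · exact ⟨x₀, by simp, u₁, by simp, by rw [Ne, Fin.ext_iff]; omega, hx₀u₀.symm, hu₀u₁⟩
    · exact ⟨x₁, by simp, u₀, by simp, by rw [Ne, Fin.ext_iff]; omega, hx₁u₁.symm, hu₀u₁.symm⟩
    · exact ⟨x₀, by simp, v₁, by simp, by rw [Ne, Fin.ext_iff]; omega, hx₀v₀.symm, hv₀v₁⟩
    · exact ⟨x₁, by simp, v₀, by simp, by rw [Ne, Fin.ext_iff]; omega, hx₁v₁.symm, hv₀v₁.symm⟩

end HeavyCycle

/-- stmt4 -/
theorem stmt4 (k : ℕ) (hk : 3 ≤ k) :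
    ¬ ∃ (a : Fin (3 * k + 1)) (c : (Gk k).Walk a a), c.IsCycle ∧
      (∀ e ∈ heavyEdges k, e ∈ c.edges) ∧
      ({x | x ∈ c.support} = Set.univ \ {zv k} ∨
        {x | x ∈ c.support} = Set.univ \ {vv k ⟨k - 1, by omega⟩}) := by
  rintro ⟨a, c, hc, hheavy, hs | hs⟩
  · exact support_ne_compl_zv hk hc hheavy hs
  · exact support_ne_compl_vv_last (by omega) hc hheavy hs
end

section
/- The graph G_3 + u_1u_3 (the join K_3 ∨ P_7 with the extra edge u_1u_3) has no induced path on more than 6 vertices; its longest induced path is u_1, u_3, z, v_3, v_2, v_1. -/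
/-- The graph `G_3 + u_1u_3`. -/
def G3plus : SimpleGraph (Fin (3 * 3 + 1)) :=
  Gk 3 ⊔ SimpleGraph.fromEdgeSet {s(uv 3 0, uv 3 2)}

/-!
The clique vertices `x_i` are adjacent to everything, whereas every vertex of an induced path
on at least four vertices has a non-neighbour on the path; so an induced path avoids the `x_i`.
An induced path on at least seven vertices therefore covers all seven path vertices, in
particular the triangle `u_1 u_2 u_3` created by the extra edge, which a path cannot contain.
-/

open SimpleGraph Finset

namespace SimpleGraph

variable {V W : Type*} {G : SimpleGraph V} {H : SimpleGraph W}

theorem pathGraph_cliqueFree_three (n : ℕ) : (pathGraph n).CliqueFree 3 :=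
  (pathGraph.bicoloring n).colorable.cliqueFree (by simp)

theorem pathGraph_exists_ne_not_adj {n : ℕ} (hn : 4 ≤ n) (i : Fin n) :
    ∃ j, j ≠ i ∧ ¬ (pathGraph n).Adj i j := by
  refine ⟨⟨if i.val < 2 then i.val + 2 else i.val - 2, by split_ifs <;> omega⟩, ?_⟩
  simp only [ne_eq, Fin.ext_iff, pathGraph_adj]
  split_ifs <;> omega

theorem Embedding.apply_ne_of_forall_adj (f : H ↪g G)
    (hH : ∀ i, ∃ j, j ≠ i ∧ ¬ H.Adj i j) {v : V} (hv : ∀ w, w ≠ v → G.Adj v w) (i : W) :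
    f i ≠ v := by
  rintro rfl
  obtain ⟨j, hji, hij⟩ := hH i
  exact hij (f.map_adj_iff.mp (hv _ (f.injective.ne hji)))

theorem Embedding.not_cliqueFree_of_isNClique_subset_range (f : H ↪g G) {n : ℕ}
    {s : Finset V} (hs : G.IsNClique n s) (hsf : (s : Set V) ⊆ Set.range f) :
    ¬ H.CliqueFree n := by
  classical
  intro hH
  refine hH (s.preimage f f.injective.injOn) ⟨fun a ha b hb hab => ?_, ?_⟩
  · rw [← f.map_adj_iff]
    exact hs.isClique (by simpa using ha) (by simpa using hb) (f.injective.ne hab)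
  · rw [card_preimage, filter_true_of_mem (fun v hv => hsf hv), hs.card_eq]

end SimpleGraph

instance : DecidableRel (Gk 3).Adj := fun a b =>
  inferInstanceAs (Decidable (a ≠ b ∧ (a.val < 3 ∨ b.val < 3 ∨ a.val + 1 = b.val ∨ b.val + 1 = a.val)))

instance : DecidableRel G3plus.Adj := fun a b =>
  decidable_of_iff ((Gk 3).Adj a b ∨ (s(a, b) = s(uv 3 0, uv 3 2) ∧ a ≠ b)) (by
    rw [G3plus, sup_adj, fromEdgeSet_adj, Set.mem_singleton_iff])

namespace G3plus

theorem adj_of_val_lt_three {v w : Fin (3 * 3 + 1)} (hv : v.val < 3) (hwv : w ≠ v) :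
    G3plus.Adj v w :=
  Or.inl ⟨hwv.symm, Or.inl hv⟩

theorem isNClique_uv : G3plus.IsNClique 3 {uv 3 0, uv 3 1, uv 3 2} := by
  decide

theorem range_eq_of_seven_le {n : ℕ} (hn : 7 ≤ n) (f : pathGraph n ↪g G3plus) :
    Set.range f = {v | 3 ≤ v.val} := by
  have hf : ∀ i, 3 ≤ (f i).val := fun i => by
    by_contra! h
    exact f.apply_ne_of_forall_adj (pathGraph_exists_ne_not_adj (by omega))
      (fun w hw => adj_of_val_lt_three h hw) i rfl
  have himage : univ.map f.toEmbedding = univ.filter fun v : Fin (3 * 3 + 1) => 3 ≤ v.val :=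
    eq_of_subset_of_card_le (fun v hv => by obtain ⟨i, -, rfl⟩ := mem_map.mp hv; simpa using hf i)
      (by simp only [card_map, card_univ, Fintype.card_fin]; exact le_trans (by decide) hn)
  simpa using congrArg (fun s : Finset _ => (s : Set (Fin (3 * 3 + 1)))) himage

def longestInducedPath : pathGraph 6 ↪g G3plus where
  toFun := ![uv 3 0, uv 3 2, zv 3, vv 3 2, vv 3 1, vv 3 0]
  inj' := by decide
  map_rel_iff' := by
    intro a b
    rw [pathGraph_adj]
    revert a b
    decide

end G3plus

/-- stmt9: `G_3 + u_1u_3` has no induced path on more than 6 vertices, and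
`u_1, u_3, z, v_3, v_2, v_1` is an induced path on 6 vertices. -/
theorem stmt9 :
    (∀ n, 7 ≤ n → IsEmpty (SimpleGraph.pathGraph n ↪g G3plus)) ∧
      ∃ e : SimpleGraph.pathGraph 6 ↪g G3plus,
        e 0 = uv 3 0 ∧ e 1 = uv 3 2 ∧ e 2 = zv 3 ∧
          e 3 = vv 3 2 ∧ e 4 = vv 3 1 ∧ e 5 = vv 3 0 := by
  refine ⟨fun n hn => ⟨fun f => ?_⟩, G3plus.longestInducedPath, rfl, rfl, rfl, rfl, rfl, rfl⟩
  refine f.not_cliqueFree_of_isNClique_subset_range G3plus.isNClique_uv ?_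
    (pathGraph_cliqueFree_three n)
  rw [G3plus.range_eq_of_seven_le hn f]
  simp [Set.insert_subset_iff, uv]
end
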